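/- arXiv:1503.06072 — 8 statements merged into one kernel-verified Lean document; each statement's English description precedes it below -/
import Mathlib

section
/- Composition of pregames is associative on coplay functions: for pregames G : X⊗U* → Y⊗T*, H : Y⊗T* → Z⊗S*, I : Z⊗S* → W⊗R*, strategies σ₁, σ₂, σ₃, and every (x,r) ∈ X × R, we have C_{(I∘H)∘G}((σ₁,σ₂),σ₃)(x,r) = C_{I∘(H∘G)}(σ₁,(σ₂,σ₃))(x,r). -/
/-- A pregame `G : X ⊗ S* → Y ⊗ R*`: a set of strategy profiles, a play
function, a coplay function and an individual rationality relation. -/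
structure Pregame (X S Y R : Type) : Type 1 where
  Strat : Type
  play : Strat → X → Y
  coplay : Strat → X × R → S
  rat : Strat → X × (Y → R) → Prop

namespace Pregame

/-- Composition of pregames: `comp G H = H ∘ G`. -/
def comp {X T Y S Z R : Type} (G : Pregame X T Y S) (H : Pregame Y S Z R) :
    Pregame X T Z R where
  Strat := G.Strat × H.Strat
  play σ x := H.play σ.2 (G.play σ.1 x)
  coplay σ xr := G.coplay σ.1 (xr.1, H.coplay σ.2 (G.play σ.1 xr.1, xr.2))
  rat σ xk :=
    G.rat σ.1 (xk.1, fun y => H.coplay σ.2 (y, xk.2 (H.play σ.2 y))) ∧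
    H.rat σ.2 (G.play σ.1 xk.1, xk.2)

/-- Tensor (monoidal) product of pregames. -/
def tensor {X₁ S₁ Y₁ R₁ X₂ S₂ Y₂ R₂ : Type}
    (G : Pregame X₁ S₁ Y₁ R₁) (H : Pregame X₂ S₂ Y₂ R₂) :
    Pregame (X₁ × X₂) (S₁ × S₂) (Y₁ × Y₂) (R₁ × R₂) where
  Strat := G.Strat × H.Strat
  play σ x := (G.play σ.1 x.1, H.play σ.2 x.2)
  coplay σ xr := (G.coplay σ.1 (xr.1.1, xr.2.1), H.coplay σ.2 (xr.1.2, xr.2.2))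
  rat σ xk :=
    G.rat σ.1 (xk.1.1, fun y₁ => (xk.2 (y₁, H.play σ.2 xk.1.2)).1) ∧
    H.rat σ.2 (xk.1.2, fun y₂ => (xk.2 (G.play σ.1 xk.1.1, y₂)).2)

/-- The identity pregame on `X ⊗ R*`. -/
def idP (X R : Type) : Pregame X R X R :=
  ⟨Unit, fun _ x => x, fun _ xr => xr.2, fun _ _ => True⟩

/-- A function viewed covariantly as a computation pregame. -/
def covariant {X Y : Type} (f : X → Y) : Pregame X Unit Y Unit :=
  ⟨Unit, fun _ => f, fun _ _ => (), fun _ _ => True⟩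

/-- A function viewed contravariantly as a computation pregame `f* : Y* → X*`. -/
def contravariant {X Y : Type} (f : X → Y) : Pregame Unit Y Unit X :=
  ⟨Unit, fun _ _ => (), fun _ ux => f ux.2, fun _ _ => True⟩

/-- The teleological unit `τ_X : X ⊗ X* → 1`. -/
def tele (X : Type) : Pregame X X Unit Unit :=
  ⟨Unit, fun _ _ => (), fun _ xu => xu.1, fun _ _ => True⟩

/-- A pair of computations `f ⊗ g*` (a purely structural pregame: trivial
strategies, play `f`, coplay `g`, rationality always true).  Used for the
canonical structural isomorphisms which the paper treats as identities. -/
def iso {X S Y R : Type} (f : X → Y) (g : R → S) : Pregame X S Y R :=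
  ⟨Unit, fun _ => f, fun _ xr => g xr.2, fun _ _ => True⟩

end Pregame

open Pregame in
/-- Associativity of composition of pregames on coplay functions. -/
theorem comp_assoc_coplay {X U Y T Z S W R : Type}
    (G : Pregame X U Y T) (H : Pregame Y T Z S) (I : Pregame Z S W R)
    (σ₁ : G.Strat) (σ₂ : H.Strat) (σ₃ : I.Strat) (x : X) (r : R) :
    (G.comp (H.comp I)).coplay (σ₁, (σ₂, σ₃)) (x, r) =
      ((G.comp H).comp I).coplay ((σ₁, σ₂), σ₃) (x, r) := by
  rfl
end

section
/- Composition of pregames is associative on individual rationality relations: for pregames G : X⊗U* → Y⊗T*, H : Y⊗T* → Z⊗S*, I : Z⊗S* → W⊗R*, strategies σ₁, σ₂, σ₃, and every context (x,k) ∈ X × (W → R), we have ((σ₁,σ₂),σ₃) E_{(I∘H)∘G} (x,k) if and only if (σ₁,(σ₂,σ₃)) E_{I∘(H∘G)} (x,k). -/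
open Pregame in
/-- Associativity of composition of pregames on individual rationality
relations. -/
theorem comp_assoc_rat {X U Y T Z S W R : Type}
    (G : Pregame X U Y T) (H : Pregame Y T Z S) (I : Pregame Z S W R)
    (σ₁ : G.Strat) (σ₂ : H.Strat) (σ₃ : I.Strat) (x : X) (k : W → R) :
    (((G.comp H).comp I).rat ((σ₁, σ₂), σ₃) (x, k) ↔
      (G.comp (H.comp I)).rat (σ₁, (σ₂, σ₃)) (x, k)) := by
  simp [Pregame.comp, and_assoc]
end

section
/- Pregames form a category: there is a category whose objects are pairs of sets (X,R) and whose morphisms (X,S) → (Y,R) are pregames (taken up to the canonical isomorphisms of strategy sets Σ × 1 ≅ Σ ≅ 1 × Σ and (Σ₁ × Σ₂) × Σ₃ ≅ Σ₁ × (Σ₂ × Σ₃)), with the identity pregame as identity and the given composition. -/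
namespace Pregame

/-- Two pregames are equivalent (equal in the sense of the paper) when their
strategy sets are related by a canonical bijection under which the play,
coplay and individual rationality data agree. -/
def Equiv' {X S Y R : Type} (G G' : Pregame X S Y R) : Prop :=
  ∃ e : G.Strat ≃ G'.Strat,
    (∀ σ, G'.play (e σ) = G.play σ) ∧
    (∀ σ, G'.coplay (e σ) = G.coplay σ) ∧
    (∀ σ c, G'.rat (e σ) c ↔ G.rat σ c)

theorem equiv'_refl {X S Y R : Type} (G : Pregame X S Y R) : Equiv' G G :=
  ⟨Equiv.refl _, fun _ => rfl, fun _ => rfl, fun _ _ => Iff.rfl⟩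

theorem equiv'_symm {X S Y R : Type} {G G' : Pregame X S Y R}
    (h : Equiv' G G') : Equiv' G' G := by
  obtain ⟨e, hp, hc, hr⟩ := h
  exact ⟨e.symm,
    fun σ => by rw [← hp (e.symm σ), e.apply_symm_apply],
    fun σ => by rw [← hc (e.symm σ), e.apply_symm_apply],
    fun σ c => by rw [← hr (e.symm σ), e.apply_symm_apply]⟩

theorem equiv'_trans {X S Y R : Type} {G G' G'' : Pregame X S Y R}
    (h : Equiv' G G') (h' : Equiv' G' G'') : Equiv' G G'' := by
  obtain ⟨e, hp, hc, hr⟩ := h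
  obtain ⟨e', hp', hc', hr'⟩ := h'
  exact ⟨e.trans e',
    fun σ => by simp [hp' (e σ), hp σ],
    fun σ => by simp [hc' (e σ), hc σ],
    fun σ c => by simp [hr' (e σ) c, hr σ c]⟩

instance pregameSetoid (X S Y R : Type) : Setoid (Pregame X S Y R) :=
  ⟨Equiv', equiv'_refl, equiv'_symm, equiv'_trans⟩

theorem comp_congr {X T Y S Z R : Type} {G G' : Pregame X T Y S}
    {H H' : Pregame Y S Z R} (hG : Equiv' G G') (hH : Equiv' H H') :
    Equiv' (G.comp H) (G'.comp H') := by
  obtain ⟨e₁, p₁, c₁, r₁⟩ := hG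
  obtain ⟨e₂, p₂, c₂, r₂⟩ := hH
  refine ⟨e₁.prodCongr e₂, fun σ => ?_, fun σ => ?_, fun σ c => ?_⟩
  · obtain ⟨a, b⟩ := σ; funext x
    change H'.play (e₂ b) (G'.play (e₁ a) x) = _
    simp only [p₁, p₂]
    rfl
  · obtain ⟨a, b⟩ := σ; funext xr
    change G'.coplay (e₁ a) (xr.1, H'.coplay (e₂ b) (G'.play (e₁ a) xr.1, xr.2)) = _
    simp only [p₁, c₁, c₂]
    rfl
  · obtain ⟨a, b⟩ := σ
    change G'.rat (e₁ a) (c.1, fun y => H'.coplay (e₂ b) (y, c.2 (H'.play (e₂ b) y))) ∧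
      H'.rat (e₂ b) (G'.play (e₁ a) c.1, c.2) ↔ _
    simp only [r₁, r₂, p₁, p₂, c₂]
    rfl

end Pregame

/-- Objects of the category of pregames: pairs of sets. -/
def PregameObj : Type 1 := Type × Type

/-- Morphisms are pregames taken up to the canonical isomorphisms of strategy
sets; identity and composition are the given ones. -/
instance : CategoryTheory.CategoryStruct PregameObj where
  Hom A B := Quotient (Pregame.pregameSetoid A.1 A.2 B.1 B.2)
  id A := ⟦Pregame.idP A.1 A.2⟧
  comp f g := Quotient.map₂ Pregame.comp
    (fun _ _ h _ _ h' => Pregame.comp_congr h h') f g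

open CategoryTheory

namespace Pregame

variable {X S Y R Z T W Q : Type}

theorem idP_comp_equiv' (G : Pregame X S Y R) : Equiv' ((idP X S).comp G) G :=
  ⟨Equiv.punitProd _, fun _ => rfl, fun _ => rfl,
    fun _ _ => (and_iff_right trivial).symm⟩

theorem comp_idP_equiv' (G : Pregame X S Y R) : Equiv' (G.comp (idP Y R)) G :=
  ⟨Equiv.prodPUnit _, fun _ => rfl, fun _ => rfl,
    fun _ _ => (and_iff_left trivial).symm⟩

theorem comp_assoc_equiv' (G : Pregame X S Y R) (H : Pregame Y R Z T)
    (K : Pregame Z T W Q) : Equiv' ((G.comp H).comp K) (G.comp (H.comp K)) :=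
  ⟨Equiv.prodAssoc _ _ _, fun _ => rfl, fun _ => rfl, fun _ _ => and_assoc.symm⟩

end Pregame

/-- Pregames form a category: the identity pregame is a left and right
identity and composition is associative (up to the canonical isomorphisms of
strategy sets, i.e. as equalities of equivalence classes). -/
theorem pregame_category :
    (∀ (A B : PregameObj) (f : A ⟶ B), 𝟙 A ≫ f = f) ∧
    (∀ (A B : PregameObj) (f : A ⟶ B), f ≫ 𝟙 B = f) ∧
    (∀ (A B C D : PregameObj) (f : A ⟶ B) (g : B ⟶ C) (h : C ⟶ D),
      (f ≫ g) ≫ h = f ≫ (g ≫ h)) :=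
  ⟨fun _ _ f => Quotient.inductionOn f fun G => Quotient.sound (Pregame.idP_comp_equiv' G),
    fun _ _ f => Quotient.inductionOn f fun G => Quotient.sound (Pregame.comp_idP_equiv' G),
    fun _ _ _ _ f g h => Quotient.inductionOn₃ f g h fun G H K =>
      Quotient.sound (Pregame.comp_assoc_equiv' G H K)⟩
end

section
/- The tensor product of pregames is functorial with respect to composition (interchange law) on play functions: for pregames G : X₁⊗T₁* → Y₁⊗S₁*, G' : Y₁⊗S₁* → Z₁⊗R₁*, H : X₂⊗T₂* → Y₂⊗S₂*, H' : Y₂⊗S₂* → Z₂⊗R₂*, and appropriate strategies, P_{(G'∘G)⊗(H'∘H)} and P_{(G'⊗H')∘(G⊗H)} agree (up to reassociation of strategy tuples). -/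
open Pregame in
/-- Interchange law of tensor and composition, on play functions. -/
theorem interchange_play {X₁ T₁ Y₁ S₁ Z₁ R₁ X₂ T₂ Y₂ S₂ Z₂ R₂ : Type}
    (G : Pregame X₁ T₁ Y₁ S₁) (G' : Pregame Y₁ S₁ Z₁ R₁)
    (H : Pregame X₂ T₂ Y₂ S₂) (H' : Pregame Y₂ S₂ Z₂ R₂)
    (σ₁ : G.Strat) (σ₁' : G'.Strat) (σ₂ : H.Strat) (σ₂' : H'.Strat)
    (x : X₁ × X₂) :
    ((G.comp G').tensor (H.comp H')).play ((σ₁, σ₁'), (σ₂, σ₂')) x =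
      ((G.tensor H).comp (G'.tensor H')).play ((σ₁, σ₂), (σ₁', σ₂')) x := by
  rfl
end

section
/- Naturality of the teleological unit (full statement): for any function f : X → Y, the pregames τ_Y ∘ (f ⊗ id_Y*) and τ_X ∘ (id_X ⊗ f*) from X⊗Y* to 1⊗1* are equal: both have strategy set 1 (up to isomorphism), equal play functions, equal coplay functions, and their individual rationality relations hold for all contexts. -/
open Pregame in
/-- Naturality of the teleological unit (full statement):
`τ_Y ∘ (f ⊗ id_Y*) = τ_X ∘ (id_X ⊗ f*)` as pregames `X ⊗ Y* → 1 ⊗ 1*`: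
both have trivial strategy set, equal play functions, equal coplay functions
(both `(x,•) ↦ f x`), and rationality relations holding at every context. -/
theorem tele_natural {X Y : Type} (f : X → Y) :
    ∀ (σ : ((iso f (id : Y → Y)).comp (tele Y)).Strat)
      (σ' : ((iso (id : X → X) f).comp (tele X)).Strat)
      (x : X) (k : Unit → Unit),
      ((iso f (id : Y → Y)).comp (tele Y)).play σ x =
        ((iso (id : X → X) f).comp (tele X)).play σ' x ∧
      ((iso f (id : Y → Y)).comp (tele Y)).coplay σ (x, ()) = f x ∧
      ((iso (id : X → X) f).comp (tele X)).coplay σ' (x, ()) = f x ∧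
      ((iso f (id : Y → Y)).comp (tele Y)).rat σ (x, k) ∧
      ((iso (id : X → X) f).comp (tele X)).rat σ' (x, k) := by
  exact fun _ _ _ _ => ⟨rfl, rfl, rfl, ⟨trivial, trivial⟩, ⟨trivial, trivial⟩⟩
end

section
/- For a two-player simultaneous game with choice sets X, Y, outcome set R, multivalued selection functions ε : (X → R) → Set X and δ : (Y → R) → Set Y, and outcome function q : X × Y → R, a strategy profile (σ₁,σ₂) ∈ X × Y is an equilibrium of the composite closed pregame τ_R ∘ (q ⊗ Δ_R*) ∘ (P₁ ⊗ P₂) if and only if it is a selection equilibrium, i.e. σ₁ ∈ ε(λx. q(x,σ₂)) and σ₂ ∈ δ(λy. q(σ₁,y)). -/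
open Pregame

/-- The decision `P₁ : 1 → X ⊗ R*` for a selection function `ε`. -/
def dec1 {X R : Type} (ε : (X → R) → Set X) : Pregame Unit Unit X R :=
  ⟨X, fun σ _ => σ, fun _ _ => (), fun σ c => σ ∈ ε c.2⟩

/-- The closed pregame `τ_R ∘ (q ⊗ Δ_R*) ∘ (P₁ ⊗ P₂)` of a two-player
simultaneous game (with the canonical structural isomorphisms inserted). -/
def simGame {X Y R : Type} (ε : (X → R) → Set X) (δ : (Y → R) → Set Y)
    (q : X × Y → R) : Pregame (Unit × Unit) (Unit × Unit) Unit Unit :=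
  ((dec1 ε).tensor (dec1 δ)).comp
    ((iso (fun p : X × Y => (p, ())) (fun s : Unit × (R × R) => s.2)).comp
      ((((covariant q).tensor (contravariant (fun r : R => (r, r))))).comp
        ((iso (fun p : R × Unit => p.1) (fun r : R => ((), r))).comp (tele R))))

/-- A strategy profile `(σ₁, σ₂)` is an equilibrium of the simultaneous-game
pregame `τ_R ∘ (q ⊗ Δ_R*) ∘ (P₁ ⊗ P₂)` iff it is a selection equilibrium. -/
theorem simGame_equilibrium_iff_selection {X Y R : Type}
    (ε : (X → R) → Set X) (δ : (Y → R) → Set Y) (q : X × Y → R)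
    (σ₁ : X) (σ₂ : Y) :
    (simGame ε δ q).rat ((σ₁, σ₂), ((), (((), ()), ((), ()))))
        (((), ()), fun _ => ()) ↔
      σ₁ ∈ ε (fun x => q (x, σ₂)) ∧ σ₂ ∈ δ (fun y => q (σ₁, y)) := by
  constructor
  · rintro ⟨⟨h1, h2⟩, -⟩
    exact ⟨h1, h2⟩
  · rintro ⟨h1, h2⟩
    exact ⟨⟨h1, h2⟩, by repeat constructor⟩
end

section
/- In the closed pregame τ_R ∘ (q ⊗ Δ_R*) ∘ (P₁ ⊗ P₂) with classical utility-maximising decisions over a nonempty finite outcome-relevant setting — where R = ℝ (or a linear order) and σ₁ E_{P₁} (•,k) ⟺ k σ₁ = max_{x∈X} k x, σ₂ E_{P₂} (•,k) ⟺ k σ₂ = max_{y∈Y} k y for finite nonempty X, Y — a strategy profile (σ₁,σ₂) is an equilibrium if and only if q(σ₁,σ₂) ≥ q(x,σ₂) for all x ∈ X and q(σ₁,σ₂) ≥ q(σ₁,y) for all y ∈ Y (i.e. (σ₁,σ₂) is a Nash equilibrium of the simultaneous game with common payoff q). -/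
open Pregame

/-- The classical utility-maximising decision over a finite nonempty set:
a strategy is rational iff it attains the maximum of the continuation. -/
def maxDec (X : Type) [Fintype X] [Nonempty X] : Pregame Unit Unit X ℝ :=
  ⟨X, fun σ _ => σ, fun _ _ => (),
    fun σ c => c.2 σ = Finset.univ.sup' Finset.univ_nonempty c.2⟩

/-- The closed pregame `τ_ℝ ∘ (q ⊗ Δ_ℝ*) ∘ (P₁ ⊗ P₂)` with classical
utility-maximising decisions. -/
def maxSimGame (X Y : Type) [Fintype X] [Nonempty X] [Fintype Y] [Nonempty Y]
    (q : X × Y → ℝ) : Pregame (Unit × Unit) (Unit × Unit) Unit Unit :=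
  ((maxDec X).tensor (maxDec Y)).comp
    ((iso (fun p : X × Y => (p, ())) (fun s : Unit × (ℝ × ℝ) => s.2)).comp
      ((((covariant q).tensor (contravariant (fun r : ℝ => (r, r))))).comp
        ((iso (fun p : ℝ × Unit => p.1) (fun r : ℝ => ((), r))).comp (tele ℝ))))

/-- With classical utility-maximising decisions over finite nonempty choice
sets, `(σ₁, σ₂)` is an equilibrium of `τ_ℝ ∘ (q ⊗ Δ_ℝ*) ∘ (P₁ ⊗ P₂)`
iff it is a Nash equilibrium of the simultaneous game with payoff `q`. -/
theorem maxSimGame_equilibrium_iff_nash (X Y : Type)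
    [Fintype X] [Nonempty X] [Fintype Y] [Nonempty Y]
    (q : X × Y → ℝ) (σ₁ : X) (σ₂ : Y) :
    (maxSimGame X Y q).rat ((σ₁, σ₂), ((), (((), ()), ((), ()))))
        (((), ()), fun _ => ()) ↔
      (∀ x : X, q (x, σ₂) ≤ q (σ₁, σ₂)) ∧ (∀ y : Y, q (σ₁, y) ≤ q (σ₁, σ₂)) := by
  simp only [maxSimGame, comp, tensor, maxDec, iso, covariant, contravariant, tele, and_true, true_and]
  constructor
  · rintro ⟨h1, h2⟩
    refine ⟨fun x => ?_, fun y => ?_⟩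
    · rw [h1]; exact Finset.le_sup' (fun x => q (x, σ₂)) (Finset.mem_univ x)
    · rw [h2]; exact Finset.le_sup' (fun y => q (σ₁, y)) (Finset.mem_univ y)
  · rintro ⟨h1, h2⟩
    exact ⟨le_antisymm (Finset.le_sup' (fun x => q (x, σ₂)) (Finset.mem_univ σ₁)) (Finset.sup'_le _ _ fun x _ => h1 x),
      le_antisymm (Finset.le_sup' (fun y => q (σ₁, y)) (Finset.mem_univ σ₂)) (Finset.sup'_le _ _ fun y _ => h2 y)⟩
end

section
/- In the sequential game pregame τ_R ∘ (q ⊗ Δ_R*) ∘ (((id_X ⊗ P₂) ∘ Δ_X) ⊗ id_R*) ∘ P₁, the continuation induced on the first decision P₁ by the rest of the diagram is k₂ x = q(x, σ₂ x), and the continuation induced on the second decision P₂ (after the first player plays σ₁) is k₄ y = q(σ₁, y); consequently (σ₁,σ₂) is an equilibrium iff q(σ₁, σ₂ σ₁) ∈ φ(λx. q(x, σ₂ x)) and q(σ₁, σ₂ σ₁) ∈ ψ(λy. q(σ₁, y)). -/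
open Pregame

/-- The first player's decision `P₁ : 1 → X ⊗ R*` for a quantifier `φ`. -/
def seqDec1 {X R : Type} (φ : (X → R) → Set R) : Pregame Unit Unit X R :=
  ⟨X, fun σ _ => σ, fun _ _ => (), fun σ c => c.2 σ ∈ φ c.2⟩

/-- The second player's decision `P₂ : X → Y ⊗ R*` for a quantifier `ψ`. -/
def seqDec2 {X Y R : Type} (ψ : (Y → R) → Set R) : Pregame X Unit Y R :=
  ⟨X → Y, fun σ x => σ x, fun _ _ => (), fun σ c => c.2 (σ c.1) ∈ ψ c.2⟩

/-- The closed pregame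
`τ_R ∘ (q ⊗ Δ_R*) ∘ (((id_X ⊗ P₂) ∘ Δ_X) ⊗ id_R*) ∘ P₁`
of a two-player sequential game (with the canonical structural isomorphisms
inserted). -/
def seqGame {X Y R : Type} (φ : (X → R) → Set R) (ψ : (Y → R) → Set R)
    (q : X × Y → R) : Pregame Unit Unit Unit Unit :=
  (seqDec1 φ).comp
    ((iso (fun x : X => (x, ())) (fun p : Unit × R => p.2)).comp
      ((((covariant (fun x : X => (x, x))).comp
            ((iso (id : X × X → X × X) (fun _ : Unit × Unit => ())).comp
              ((covariant (id : X → X)).tensor (seqDec2 ψ)))).tensor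
          (contravariant (id : R → R))).comp
        ((iso (id : (X × Y) × Unit → (X × Y) × Unit)
            (fun s : Unit × (R × R) => (((), s.2.1), s.2.2))).comp
          ((((covariant q).tensor (contravariant (fun r : R => (r, r))))).comp
            ((iso (fun p : R × Unit => p.1) (fun r : R => ((), r))).comp
              (tele R))))))

/-- The strategy profile `(σ₁, σ₂)` of the sequential game, padded with the
trivial strategies of the computations and structural isomorphisms. -/
def seqStrat {X Y R : Type} (φ : (X → R) → Set R) (ψ : (Y → R) → Set R)
    (q : X × Y → R) (σ₁ : X) (σ₂ : X → Y) : (seqGame φ ψ q).Strat :=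
  (σ₁, ((), (((((), ((), ((), σ₂)))), ()), ((), (((), ()), ((), ()))))))

/-- In the sequential game pregame, the continuation induced on the first
decision `P₁` is `x ↦ q (x, σ₂ x)`, and that induced on the second decision
`P₂` (after the first player plays `σ₁`) is `y ↦ q (σ₁, y)`; consequently
`(σ₁, σ₂)` is an equilibrium iff `q (σ₁, σ₂ σ₁) ∈ φ (fun x => q (x, σ₂ x))`
and `q (σ₁, σ₂ σ₁) ∈ ψ (fun y => q (σ₁, y))`. -/
theorem seqGame_continuations {X Y R : Type}
    (φ : (X → R) → Set R) (ψ : (Y → R) → Set R) (q : X × Y → R)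
    (σ₁ : X) (σ₂ : X → Y) :
    ((seqGame φ ψ q).rat (seqStrat φ ψ q σ₁ σ₂) ((), fun _ => ()) ↔
      (seqDec1 φ).rat σ₁ ((), fun x => q (x, σ₂ x)) ∧
      (seqDec2 ψ).rat σ₂ (σ₁, fun y => q (σ₁, y))) ∧
    ((seqGame φ ψ q).rat (seqStrat φ ψ q σ₁ σ₂) ((), fun _ => ()) ↔
      q (σ₁, σ₂ σ₁) ∈ φ (fun x => q (x, σ₂ x)) ∧
      q (σ₁, σ₂ σ₁) ∈ ψ (fun y => q (σ₁, y))) := by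
  constructor <;> simp [seqGame, seqStrat, seqDec1, seqDec2, Pregame.comp, Pregame.tensor, Pregame.iso, Pregame.covariant, Pregame.contravariant, Pregame.tele]
end
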